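/- arXiv:1702.07955 — 2 statements merged into one kernel-verified Lean document; each statement's English description precedes it below -/
import Mathlib

section
/- Let G and H be locally compact Hausdorff topological groups, each equipped with its Borel σ-algebra. Suppose there exist a group homomorphism φ : H → Sym(G) such that φ(h) is a Borel piecewise translation of G for every h ∈ H, and a Borel measurable map ψ : G → H such that ψ(φ(h)(x)) = h·ψ(x) for all h ∈ H and x ∈ G. If G is amenable, then H is amenable. -/
/-- A topological group is amenable if there is a left-invariant mean on the space
`C_b(G)` of bounded continuous real-valued functions on `G`. -/
def IsLCAmenable (G : Type*) [Group G] [TopologicalSpace G] : Prop :=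
  ∃ μ : BoundedContinuousFunction G ℝ →ₗ[ℝ] ℝ,
    (∀ f : BoundedContinuousFunction G ℝ, (∀ x : G, 0 ≤ f x) → 0 ≤ μ f) ∧
    μ 1 = 1 ∧
    ∀ (g : G) (f f' : BoundedContinuousFunction G ℝ),
      (∀ x : G, f' x = f (g * x)) → μ f' = μ f

/-- A bijection `α : G → G` is a Borel piecewise translation if there is a finite
partition of `G` into Borel sets on each of which `α` agrees with a left translation. -/
def IsBorelPiecewiseTranslation {G : Type*} [Group G] [MeasurableSpace G]
    (α : Equiv.Perm G) : Prop :=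
  ∃ 𝓟 : Finset (Set G),
    (∀ P ∈ 𝓟, MeasurableSet P) ∧
    (∀ x : G, ∃! P : Set G, P ∈ 𝓟 ∧ x ∈ P) ∧
    (∀ P ∈ 𝓟, ∃ g : G, ∀ x ∈ P, α x = g * x)


/-!
Pull bounded continuous functions on `H` back along `ψ`; they become bounded Borel functions
on `G`. An invariant mean on `C_b(G)` extends to a left-invariant mean on bounded Borel
functions by first smoothing them, `F ↦ ∫ F z k (x⁻¹ z) dz` against a continuous compactly
supported bump `k` with respect to Haar measure. Such a mean is also invariant under Borel
piecewise translations, since `F ∘ α` splits into finitely many translated restrictions of `F`.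
Equivariance of `ψ` turns `f ∘ λ_h ∘ ψ` into `f ∘ ψ ∘ φ(h)`, so the composite mean on `C_b(H)`
is left-invariant.
-/

open MeasureTheory Set

section BoundedMeasurable

variable {X Y : Type*} [MeasurableSpace X] [MeasurableSpace Y]

def boundedMeasurable (X : Type*) [MeasurableSpace X] : Subalgebra ℝ (X → ℝ) where
  carrier := {F | Measurable F ∧ ∃ C, ∀ x, ‖F x‖ ≤ C}
  mul_mem' := by
    rintro F F' ⟨hF, C, hC⟩ ⟨hF', C', hC'⟩
    refine ⟨hF.mul hF', C * C', fun x => ?_⟩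
    rw [Pi.mul_apply, norm_mul]
    exact mul_le_mul (hC x) (hC' x) (norm_nonneg _) ((norm_nonneg _).trans (hC x))
  add_mem' := by
    rintro F F' ⟨hF, C, hC⟩ ⟨hF', C', hC'⟩
    exact ⟨hF.add hF', C + C', fun x => (norm_add_le _ _).trans (add_le_add (hC x) (hC' x))⟩
  algebraMap_mem' r := ⟨measurable_const, ‖r‖, fun _ => le_rfl⟩

theorem comp_mem_boundedMeasurable {F : X → ℝ} (hF : F ∈ boundedMeasurable X) {f : Y → X}
    (hf : Measurable f) : F ∘ f ∈ boundedMeasurable Y :=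
  ⟨hF.1.comp hf, hF.2.imp fun _ hC y => hC (f y)⟩

theorem indicator_mem_boundedMeasurable {F : X → ℝ} (hF : F ∈ boundedMeasurable X) {s : Set X}
    (hs : MeasurableSet s) : s.indicator F ∈ boundedMeasurable X :=
  ⟨hF.1.indicator hs, hF.2.imp fun _ hC x => (norm_indicator_le_norm_self F x).trans (hC x)⟩

theorem BoundedContinuousFunction.mem_boundedMeasurable [TopologicalSpace X]
    [OpensMeasurableSpace X] (f : BoundedContinuousFunction X ℝ) :
    ⇑f ∈ boundedMeasurable X :=
  ⟨f.continuous.measurable, ‖f‖, f.norm_coe_le_norm⟩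

theorem locallyIntegrable_of_mem_boundedMeasurable [TopologicalSpace X] {μ : Measure X}
    [IsLocallyFiniteMeasure μ] {F : X → ℝ} (hF : F ∈ boundedMeasurable X) :
    LocallyIntegrable F μ := by
  obtain ⟨hFm, C, hC⟩ := hF
  exact (locallyIntegrable_const C).mono hFm.aestronglyMeasurable
    (ae_of_all _ fun x => (hC x).trans (le_abs_self C))

def BoundedContinuousFunction.compMeasurableₗ [TopologicalSpace X] [OpensMeasurableSpace X]
    {ψ : Y → X} (hψ : Measurable ψ) :
    BoundedContinuousFunction X ℝ →ₗ[ℝ] boundedMeasurable Y where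
  toFun f := ⟨f ∘ ψ, comp_mem_boundedMeasurable f.mem_boundedMeasurable hψ⟩
  map_add' _ _ := rfl
  map_smul' _ _ := rfl

end BoundedMeasurable

section Smoothing

variable {G : Type*} [Group G] [MeasurableSpace G] (μ : Measure G) (k : G → ℝ)

noncomputable def smoothing (F : G → ℝ) (x : G) : ℝ :=
  ∫ z, F z * k (x⁻¹ * z) ∂μ

variable {μ k}

theorem smoothing_nonneg (hk : 0 ≤ k) {F : G → ℝ} (hF : 0 ≤ F) (x : G) :
    0 ≤ smoothing μ k F x :=
  integral_nonneg fun z => mul_nonneg (hF z) (hk _)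

theorem smoothing_const [MeasurableMul G] [μ.IsMulLeftInvariant] (c : ℝ) (x : G) :
    smoothing μ k (fun _ => c) x = c * ∫ z, k z ∂μ := by
  rw [smoothing, integral_const_mul, integral_mul_left_eq_self k x⁻¹]

theorem smoothing_translate [MeasurableMul G] [μ.IsMulLeftInvariant] (F : G → ℝ) (g x : G) :
    smoothing μ k (fun z => F (g * z)) x = smoothing μ k F (g * x) := by
  rw [smoothing, smoothing, ← integral_mul_left_eq_self (fun z => F z * k ((g * x)⁻¹ * z)) g]
  simp only [mul_inv_rev, mul_assoc, inv_mul_cancel_left]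

theorem smoothing_smul (r : ℝ) (F : G → ℝ) (x : G) :
    smoothing μ k (r • F) x = r * smoothing μ k F x := by
  simp only [smoothing, Pi.smul_apply, smul_eq_mul, mul_assoc, integral_const_mul]

variable [TopologicalSpace G] [IsTopologicalGroup G] [BorelSpace G]

theorem integrable_kernel_translate [IsFiniteMeasureOnCompacts μ] (hk : Continuous k)
    (hks : HasCompactSupport k) (x : G) : Integrable (fun z => k (x⁻¹ * z)) μ :=
  (hk.comp (continuous_const_mul x⁻¹)).integrable_of_hasCompactSupport
    (hks.comp_homeomorph (Homeomorph.mulLeft x⁻¹))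

theorem integrable_mul_kernel [IsFiniteMeasureOnCompacts μ] (hk : Continuous k)
    (hks : HasCompactSupport k) {F : G → ℝ} (hF : F ∈ boundedMeasurable G) (x : G) :
    Integrable (fun z => F z * k (x⁻¹ * z)) μ :=
  let ⟨hFm, _, hC⟩ := hF
  (integrable_kernel_translate hk hks x).bdd_mul hFm.aestronglyMeasurable (ae_of_all _ hC)

theorem continuous_smoothing [LocallyCompactSpace G] (hk : Continuous k)
    (hks : HasCompactSupport k) {F : G → ℝ} (hF : LocallyIntegrable F μ) :
    Continuous (smoothing μ k F) := by
  refine continuous_iff_continuousAt.2 fun x₀ => ?_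
  obtain ⟨K, hK, hKx₀⟩ := exists_compact_mem_nhds x₀
  have hcont : ContinuousOn
      (fun x => ∫ z, ContinuousLinearMap.lsmul ℝ ℝ (F z) (k (x⁻¹ * z)) ∂μ) K := by
    refine continuousOn_integral_bilinear_of_locally_integrable_of_compact_support _
      (hK.mul hks) (hk.comp (continuous_fst.inv.mul continuous_snd)).continuousOn ?_
      (hF.integrableOn_isCompact (hK.mul hks))
    intro x z hx hz
    by_contra hne
    exact hz ⟨x, hx, x⁻¹ * z, subset_tsupport _ hne, mul_inv_cancel_left x z⟩
  exact hcont.continuousAt hKx₀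

theorem norm_smoothing_le [IsFiniteMeasureOnCompacts μ] [μ.IsMulLeftInvariant]
    (hk : Continuous k) (hks : HasCompactSupport k) {F : G → ℝ} {C : ℝ}
    (hC : ∀ z, ‖F z‖ ≤ C) (x : G) :
    ‖smoothing μ k F x‖ ≤ C * ∫ z, |k z| ∂μ := by
  have hbound : ∀ z, ‖F z * k (x⁻¹ * z)‖ ≤ C * |k (x⁻¹ * z)| := fun z => by
    rw [norm_mul, Real.norm_eq_abs (k _)]
    exact mul_le_mul_of_nonneg_right (hC z) (abs_nonneg _)
  calc ‖smoothing μ k F x‖ ≤ ∫ z, C * |k (x⁻¹ * z)| ∂μ :=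
        norm_integral_le_of_norm_le ((integrable_kernel_translate hk hks x).abs.const_mul C)
          (ae_of_all _ hbound)
    _ = C * ∫ z, |k z| ∂μ := by
        rw [integral_const_mul, integral_mul_left_eq_self (fun z => |k z|) x⁻¹]

theorem smoothing_add [IsFiniteMeasureOnCompacts μ] (hk : Continuous k)
    (hks : HasCompactSupport k) {F F' : G → ℝ} (hF : F ∈ boundedMeasurable G)
    (hF' : F' ∈ boundedMeasurable G) (x : G) :
    smoothing μ k (F + F') x = smoothing μ k F x + smoothing μ k F' x := by
  simp only [smoothing, Pi.add_apply, add_mul]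
  exact integral_add (integrable_mul_kernel hk hks hF x) (integrable_mul_kernel hk hks hF' x)

variable [LocallyCompactSpace G] [IsFiniteMeasureOnCompacts μ] [μ.IsMulLeftInvariant]

variable (μ) in
noncomputable def smoothingₗ (hk : Continuous k) (hks : HasCompactSupport k) :
    boundedMeasurable G →ₗ[ℝ] BoundedContinuousFunction G ℝ where
  toFun F := .ofNormedAddCommGroup (smoothing μ k F)
    (continuous_smoothing hk hks (locallyIntegrable_of_mem_boundedMeasurable F.2))
    (F.2.2.choose * ∫ z, |k z| ∂μ) (norm_smoothing_le hk hks F.2.2.choose_spec)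
  map_add' F F' := by
    ext x
    exact smoothing_add hk hks F.2 F'.2 x
  map_smul' r F := by
    ext x
    exact smoothing_smul r F x

theorem smoothingₗ_apply (hk : Continuous k) (hks : HasCompactSupport k)
    (F : boundedMeasurable G) (x : G) : smoothingₗ μ hk hks F x = smoothing μ k F x :=
  rfl

end Smoothing

section Mean

variable {G : Type*} [Group G] [MeasurableSpace G]

def boundedMeasurable.IsLeftInvariant (m : boundedMeasurable G →ₗ[ℝ] ℝ) : Prop :=
  ∀ (g : G) (F F' : boundedMeasurable G),
    (∀ x, (F' : G → ℝ) x = (F : G → ℝ) (g * x)) → m F' = m F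

theorem IsLCAmenable.exists_boundedMeasurable_mean [TopologicalSpace G] [IsTopologicalGroup G]
    [LocallyCompactSpace G] [BorelSpace G] (hG : IsLCAmenable G) :
    ∃ m : boundedMeasurable G →ₗ[ℝ] ℝ,
      (∀ F : boundedMeasurable G, (∀ x, 0 ≤ (F : G → ℝ) x) → 0 ≤ m F) ∧
      m 1 = 1 ∧ boundedMeasurable.IsLeftInvariant m := by
  obtain ⟨mean, hmean_nonneg, hmean_one, hmean_inv⟩ := hG
  obtain ⟨k, hks, hk_nonneg, hk1⟩ := exists_continuous_nonneg_pos (1 : G)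
  set c := ∫ z, k z ∂(Measure.haar : Measure G)
  have hc : 0 < c :=
    k.continuous.integral_pos_of_hasCompactSupport_nonneg_nonzero hks hk_nonneg hk1
  let S := smoothingₗ Measure.haar k.continuous hks
  refine ⟨c⁻¹ • mean ∘ₗ S, fun F hF => ?_, ?_, fun g F F' hF' => ?_⟩
  · exact mul_nonneg (inv_nonneg.2 hc.le)
      (hmean_nonneg _ fun x => smoothing_nonneg hk_nonneg (fun z => hF z) x)
  · have hS1 : S 1 = c • 1 := by
      ext x
      change smoothing _ k (fun _ => 1) x = c * 1
      rw [smoothing_const, one_mul, mul_one]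
    simp [hS1, hmean_one, hc.ne']
  · simp only [LinearMap.smul_apply, LinearMap.comp_apply]
    congr 1
    refine hmean_inv g _ _ fun x => ?_
    rw [smoothingₗ_apply, smoothingₗ_apply, ← smoothing_translate]
    exact congrArg (smoothing _ k · x) (funext hF')

end Mean

theorem Finset.sum_indicator_of_existsUnique {X M : Type*} [AddCommMonoid M]
    {𝓟 : Finset (Set X)} {x : X} (h : ∃! P, P ∈ 𝓟 ∧ x ∈ P) (f : X → M) :
    ∑ P ∈ 𝓟, P.indicator f x = f x := by
  obtain ⟨P₀, ⟨hP₀, hxP₀⟩, huniq⟩ := h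
  rw [Finset.sum_eq_single_of_mem P₀ hP₀ fun P hP hne =>
    indicator_of_notMem (fun hxP => hne (huniq P ⟨hP, hxP⟩)) f]
  exact indicator_of_mem hxP₀ f

theorem Equiv.Perm.preimage_symm_eq_preimage_mul {G : Type*} [Group G] {α : Equiv.Perm G}
    {P : Set G} {g : G} (h : ∀ x ∈ P, α x = g * x) :
    α.symm ⁻¹' P = (g⁻¹ * ·) ⁻¹' P := by
  ext z
  constructor
  · intro hz
    have hαz : z = g * α.symm z := by simpa using h _ hz
    simpa [mem_preimage, ← eq_inv_mul_of_mul_eq hαz.symm] using hz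
  · intro hz
    have hαz : α (g⁻¹ * z) = z := by rw [h _ hz, mul_inv_cancel_left]
    simpa [mem_preimage, α.symm_apply_eq.2 hαz.symm] using hz

section PiecewiseTranslation

variable {G : Type*} [Group G] [MeasurableSpace G] [MeasurableMul G]

theorem boundedMeasurable.IsLeftInvariant.map_eq_of_isBorelPiecewiseTranslation
    {m : boundedMeasurable G →ₗ[ℝ] ℝ} (hm : boundedMeasurable.IsLeftInvariant m)
    {α : Equiv.Perm G} (hα : IsBorelPiecewiseTranslation α) (F F' : boundedMeasurable G)
    (hF' : ∀ x, (F' : G → ℝ) x = (F : G → ℝ) (α x)) : m F' = m F := by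
  obtain ⟨𝓟, hmeas, hpart, htrans⟩ := hα
  choose g hg using htrans
  have hpre (P : 𝓟) : α.symm ⁻¹' P = ((g P P.2)⁻¹ * ·) ⁻¹' P :=
    Equiv.Perm.preimage_symm_eq_preimage_mul (hg P P.2)
  -- `B P` is `F` on `α '' P`; its translate `A P` is `F ∘ α` on `P`.
  let B (P : 𝓟) : boundedMeasurable G :=
    ⟨(α.symm ⁻¹' P).indicator (F : G → ℝ), indicator_mem_boundedMeasurable F.2
      (hpre P ▸ (hmeas P P.2).preimage (measurable_const_mul _))⟩
  let A (P : 𝓟) : boundedMeasurable G :=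
    ⟨fun x => (B P : G → ℝ) (g P P.2 * x),
      comp_mem_boundedMeasurable (B P).2 (measurable_const_mul _)⟩
  have hB (P : 𝓟) (z : G) :
      (B P : G → ℝ) z = (P : Set G).indicator ((F : G → ℝ) ∘ α) (α.symm z) := by
    by_cases hz : α.symm z ∈ (P : Set G)
    · simp [B, indicator_of_mem hz, indicator_of_mem (show z ∈ α.symm ⁻¹' P from hz)]
    · simp [B, indicator_of_notMem hz, indicator_of_notMem (show z ∉ α.symm ⁻¹' P from hz)]
  have hA (P : 𝓟) (x : G) : (A P : G → ℝ) x = (P : Set G).indicator ((F : G → ℝ) ∘ α) x := by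
    change (α.symm ⁻¹' P).indicator (F : G → ℝ) (g P P.2 * x) = _
    rw [hpre P]
    by_cases hx : x ∈ (P : Set G)
    · rw [indicator_of_mem (by simpa using hx), indicator_of_mem hx, Function.comp_apply,
        hg _ _ x hx]
    · rw [indicator_of_notMem (by simpa using hx), indicator_of_notMem hx]
  have hF'_sum : F' = ∑ P, A P := by
    ext x
    simp only [AddSubmonoidClass.coe_finsetSum, Finset.sum_apply, hA, hF']
    rw [Finset.sum_coe_sort 𝓟 fun P : Set G => P.indicator ((F : G → ℝ) ∘ α) x]
    exact (Finset.sum_indicator_of_existsUnique (hpart x) ((F : G → ℝ) ∘ α)).symm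
  have hF_sum : F = ∑ P, B P := by
    ext z
    simp only [AddSubmonoidClass.coe_finsetSum, Finset.sum_apply, hB]
    rw [Finset.sum_coe_sort 𝓟 (fun P : Set G => P.indicator ((F : G → ℝ) ∘ α) (α.symm z)),
      Finset.sum_indicator_of_existsUnique (hpart _), Function.comp_apply,
      Equiv.apply_symm_apply]
  rw [hF'_sum, hF_sum, map_sum, map_sum]
  exact Finset.sum_congr rfl fun P _ => hm _ _ _ fun x => rfl

end PiecewiseTranslation

theorem stmt_10_general {G H : Type*}
    [Group G] [TopologicalSpace G] [IsTopologicalGroup G] [LocallyCompactSpace G]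
    [MeasurableSpace G] [BorelSpace G]
    [Group H] [TopologicalSpace H]
    [MeasurableSpace H] [BorelSpace H]
    (φ : H →* Equiv.Perm G) (hφ : ∀ h : H, IsBorelPiecewiseTranslation (φ h))
    (ψ : G → H) (hψ : Measurable ψ)
    (heq : ∀ (h : H) (x : G), ψ (φ h x) = h * ψ x)
    (hG : IsLCAmenable G) :
    IsLCAmenable H := by
  obtain ⟨m, hm_nonneg, hm_one, hm_inv⟩ := hG.exists_boundedMeasurable_mean
  let pullback := BoundedContinuousFunction.compMeasurableₗ (X := H) hψ
  refine ⟨m ∘ₗ pullback, fun f hf => hm_nonneg _ fun x => hf (ψ x), hm_one, ?_⟩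
  intro h f f' hf'
  refine hm_inv.map_eq_of_isBorelPiecewiseTranslation (hφ h) _ _ fun x => ?_
  change f' (ψ x) = f (ψ (φ h x))
  rw [hf', heq]

/-- If `φ : H → Sym(G)` maps into Borel piecewise translations of `G`
and there is a Borel measurable equivariant map `ψ : G → H`, then amenability of `G`
implies amenability of `H`. -/
theorem stmt_10 {G H : Type*}
    [Group G] [TopologicalSpace G] [IsTopologicalGroup G] [LocallyCompactSpace G]
    [T2Space G] [MeasurableSpace G] [BorelSpace G]
    [Group H] [TopologicalSpace H] [IsTopologicalGroup H] [LocallyCompactSpace H]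
    [T2Space H] [MeasurableSpace H] [BorelSpace H]
    (φ : H →* Equiv.Perm G) (hφ : ∀ h : H, IsBorelPiecewiseTranslation (φ h))
    (ψ : G → H) (hψ : Measurable ψ)
    (heq : ∀ (h : H) (x : G), ψ (φ h x) = h * ψ x)
    (hG : IsLCAmenable G) :
    IsLCAmenable H :=
  stmt_10_general φ hφ ψ hψ heq hG
end

section
/- Let X be a metric space. Then there exists a bornologous injection from ℤ (with its usual metric) into X if and only if there exists an injective group homomorphism from the wobbling group W(ℤ) into the wobbling group W(X). -/
/-!
A bornologous injection `f : ℤ → X` lets `W(ℤ)` act on `f(ℤ)` by transport, fixing the rest of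
`X`; bornology of `f` keeps displacements bounded.

Conversely, suppose `ℤ` admits no bornologous injection into `X`. Then for every `r` the graph
joining points at distance `≤ r` has only finite components: an infinite component either
contains an infinite bounded set or is locally finite, and then Kőnig's lemma gives a ray, which
is folded into an injection of `ℤ`. Let `T`, `a`, `b` be the images of the shift and of the
transpositions `(0 1)`, `(1 2)`. Choosing `r` larger than their displacements, each of them
preserves every such finite component `C`, and some power `Tᵏ` is the identity on `C`. Hence on
`C` the involution `a` agrees with its conjugate `Tᵏ a T⁻ᵏ`, which commutes with `b` for `k ≥ 3`.
So on `C` the order of `ab` divides both `2` and `3`: the image of the `3`-cycle `(0 1)(1 2)` is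
trivial, and the homomorphism is not injective.
-/

/-- The wobbling group of a metric space: all permutations of bounded displacement. -/
def Wobbling (X : Type*) [MetricSpace X] : Subgroup (Equiv.Perm X) where
  carrier := {α : Equiv.Perm X | ∃ r : ℝ, ∀ x : X, dist x (α x) ≤ r}
  one_mem' := ⟨0, fun x => by simp⟩
  mul_mem' := by
    rintro a b ⟨r, hr⟩ ⟨s, hs⟩
    exact ⟨s + r, fun x =>
      (dist_triangle x (b x) (a (b x))).trans (add_le_add (hs x) (hr (b x)))⟩
  inv_mem' := by
    rintro a ⟨r, hr⟩
    refine ⟨r, fun x => ?_⟩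
    have := hr (a⁻¹ x)
    simpa [dist_comm] using this

/-- A map between metric spaces is bornologous if it maps pairs at uniformly bounded
distance to pairs at uniformly bounded distance. -/
def Bornologous {X Y : Type*} [MetricSpace X] [MetricSpace Y] (f : X → Y) : Prop :=
  ∀ r : ℝ, ∃ s : ℝ, ∀ x y : X, dist x y ≤ r → dist (f x) (f y) ≤ s

open Function Set

section Bornologous

variable {X Y Z : Type*} [MetricSpace X] [MetricSpace Y] [MetricSpace Z]

theorem Bornologous.comp {g : Y → Z} {f : X → Y} (hg : Bornologous g) (hf : Bornologous f) :
    Bornologous (g ∘ f) := fun r ↦ by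
  obtain ⟨s, hs⟩ := hf r
  obtain ⟨t, ht⟩ := hg s
  exact ⟨t, fun x y hxy ↦ ht _ _ (hs x y hxy)⟩

theorem bornologous_of_isBounded_range {f : X → Y} (hf : Bornology.IsBounded (range f)) :
    Bornologous f := fun _ ↦ by
  obtain ⟨C, hC⟩ := Metric.isBounded_iff.1 hf
  exact ⟨C, fun x y _ ↦ hC (mem_range_self x) (mem_range_self y)⟩

theorem bornologous_of_dist_succ_le {c : ℕ → X} {r : ℝ} (hc : ∀ n, dist (c n) (c (n + 1)) ≤ r) :
    Bornologous c := by
  have hr : 0 ≤ r := dist_nonneg.trans (hc 0)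
  have key : ∀ m n, m ≤ n → dist (c m) (c n) ≤ dist m n * r := by
    intro m n hmn
    calc dist (c m) (c n) ≤ ∑ _ ∈ Finset.Ico m n, r :=
          dist_le_Ico_sum_of_dist_le hmn fun _ _ ↦ hc _
      _ = dist m n * r := by
          rw [Finset.sum_const, Nat.card_Ico, nsmul_eq_mul, Nat.dist_eq, abs_sub_comm,
            abs_of_nonneg (by simpa using hmn), Nat.cast_sub hmn]
  intro R
  refine ⟨R * r, fun m n hmn ↦ ?_⟩
  rcases le_total m n with h | h
  · exact (key m n h).trans (mul_le_mul_of_nonneg_right hmn hr)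
  · rw [dist_comm] at hmn ⊢
    exact (key n m h).trans (mul_le_mul_of_nonneg_right hmn hr)

end Bornologous

/-- Enumerates `ℤ` as `0, -1, 1, -2, 2, …`. -/
def zigzag (a : ℤ) : ℕ := (2 * a).toNat + (-(2 * a) - 1).toNat

theorem zigzag_injective : Injective zigzag := by
  intro a b h
  simp only [zigzag] at h
  omega

theorem bornologous_zigzag : Bornologous zigzag := by
  intro R
  refine ⟨2 * R + 1, fun a b hab ↦ ?_⟩
  have h : |((zigzag a : ℤ) - zigzag b)| ≤ 2 * |a - b| + 1 := by
    rw [Int.abs_eq_natAbs, Int.abs_eq_natAbs]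
    simp only [zigzag]
    omega
  have h' : |((zigzag a : ℝ) - zigzag b)| ≤ 2 * |(a : ℝ) - b| + 1 := by exact_mod_cast h
  rw [Int.dist_eq] at hab
  rw [Nat.dist_eq]
  linarith

namespace SimpleGraph

variable {V : Type*} (G : SimpleGraph V)

theorem finite_setOf_exists_walk_length_le (hfin : ∀ v, (G.neighborSet v).Finite) (v : V) (n : ℕ) :
    {w | ∃ p : G.Walk w v, p.length ≤ n}.Finite := by
  induction n with
  | zero =>
    refine (finite_singleton v).subset ?_
    rintro w ⟨p, hp⟩
    exact Walk.eq_of_length_eq_zero (Nat.le_zero.1 hp)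
  | succ n ih =>
    refine (ih.union (ih.biUnion fun u _ ↦ hfin u)).subset ?_
    rintro w ⟨p, hp⟩
    cases p with
    | nil => exact Or.inl ⟨.nil, Nat.zero_le n⟩
    | cons h q =>
      rw [Walk.length_cons] at hp
      exact Or.inr (mem_biUnion ⟨q, by omega⟩ (G.mem_neighborSet _ _ |>.2 h.symm))

theorem exists_isPath_le_length (hfin : ∀ v, (G.neighborSet v).Finite) {v : V}
    (hinf : {w | G.Reachable v w}.Infinite) (n : ℕ) :
    ∃ w, ∃ p : G.Walk v w, p.IsPath ∧ n ≤ p.length := by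
  classical
  obtain ⟨w, hw, hfar⟩ := (hinf.sdiff (G.finite_setOf_exists_walk_length_le hfin v n)).nonempty
  obtain ⟨p, hp⟩ := hw.some.toPath
  refine ⟨w, p, hp, ?_⟩
  by_contra! h
  exact hfar ⟨p.reverse, by rw [Walk.length_reverse]; omega⟩

/-- **Kőnig's lemma**. -/
theorem exists_injective_adj_succ (hfin : ∀ v, (G.neighborSet v).Finite) {v : V}
    (hinf : {w | G.Reachable v w}.Infinite) :
    ∃ c : ℕ → V, Injective c ∧ ∀ n, G.Adj (c n) (c (n + 1)) := by
  let α (i : ℕ) := {p : Fin (i + 1) → V //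
    p 0 = v ∧ Injective p ∧ ∀ j : Fin i, G.Adj (p j.castSucc) (p j.succ)}
  let π {i j : ℕ} (hij : i ≤ j) (q : α j) : α i :=
    ⟨q.1 ∘ Fin.castLE (by omega), q.2.1, q.2.2.1.comp (Fin.castLE_injective _),
      fun k ↦ q.2.2.2 (Fin.castLE hij k)⟩
  have : Finite (α 0) := by
    refine @Finite.of_subsingleton _ ⟨fun p q ↦ Subtype.ext (funext fun j ↦ ?_)⟩
    rw [Fin.fin_one_eq_zero j, p.2.1, q.2.1]
  have : ∀ i, Nonempty (α i) := by
    intro i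
    obtain ⟨w, p, hp, hi⟩ := G.exists_isPath_le_length hfin hinf i
    refine ⟨⟨fun j ↦ p.getVert j, Walk.getVert_zero p, fun j k hjk ↦ ?_, fun j ↦ ?_⟩⟩
    · exact Fin.ext (hp.getVert_injOn (by simp; omega) (by simp; omega) hjk)
    · exact p.adj_getVert_succ (by simp; omega)
  obtain ⟨f, hf⟩ := exists_seq_forall_proj_of_forall_finite π (fun _ _ ↦ rfl)
    (fun _ _ _ _ _ _ ↦ rfl) fun i a ↦ by
      -- a one-step extension of `a` is determined by its last vertex, a neighbour of `a`'s
      refine Finite.of_finite_image (f := fun b : α (i + 1) ↦ b.1 (Fin.last (i + 1)))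
        ((hfin (a.1 (Fin.last i))).subset ?_) ?_
      · rintro _ ⟨b, rfl, rfl⟩
        exact b.2.2.2 (Fin.last i)
      · intro b hb b' hb' h
        refine Subtype.ext (funext fun j ↦ ?_)
        induction j using Fin.lastCases with
        | last => exact h
        | cast k => exact congrFun (congrArg Subtype.val (hb.trans hb'.symm)) k
  have hc : ∀ m n (hmn : m ≤ n), (f n).1 ⟨m, by omega⟩ = (f m).1 (Fin.last m) := by
    intro m n hmn
    rw [← hf hmn]
    rfl
  refine ⟨fun n ↦ (f n).1 (Fin.last n), fun m n hmn ↦ ?_, fun n ↦ ?_⟩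
  · wlog h : m ≤ n generalizing m n
    · exact (this n m hmn.symm (le_of_not_ge h)).symm
    simpa using (f n).2.2.1 (((hc m n h).trans hmn).trans (hc n n le_rfl).symm)
  · convert (f (n + 1)).2.2.2 (Fin.last n) using 1
    · exact (hc n (n + 1) (by omega)).symm
    · rfl

end SimpleGraph

section CoarseGraph

variable {X : Type*} [MetricSpace X]

def coarseGraph (X : Type*) [MetricSpace X] (r : ℝ) : SimpleGraph X where
  Adj a b := a ≠ b ∧ dist a b ≤ r
  symm := ⟨fun a b h ↦ ⟨h.1.symm, dist_comm a b ▸ h.2⟩⟩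
  loopless := ⟨fun _ h ↦ h.1 rfl⟩

theorem coarseGraph_reachable_of_dist_le {r : ℝ} {x y : X} (h : dist x y ≤ r) :
    (coarseGraph X r).Reachable x y := by
  obtain rfl | hne := eq_or_ne x y
  · rfl
  · exact SimpleGraph.Adj.reachable (G := coarseGraph X r) ⟨hne, h⟩

theorem coarseGraph_reachable_apply_iff {r : ℝ} {σ : Equiv.Perm X}
    (hσ : ∀ y, dist y (σ y) ≤ r) (x y : X) :
    (coarseGraph X r).Reachable x (σ y) ↔ (coarseGraph X r).Reachable x y :=
  ⟨fun h ↦ h.trans (coarseGraph_reachable_of_dist_le (dist_comm (σ y) y ▸ hσ y)),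
    fun h ↦ h.trans (coarseGraph_reachable_of_dist_le (hσ y))⟩

theorem exists_injective_bornologous_of_infinite_of_isBounded {s : Set X}
    (hs : s.Infinite) (hb : Bornology.IsBounded s) :
    ∃ f : ℤ → X, Injective f ∧ Bornologous f := by
  let e := hs.natEmbedding.trans (Function.Embedding.subtype s)
  refine ⟨e ∘ Equiv.intEquivNat, e.injective.comp Equiv.intEquivNat.injective,
    bornologous_of_isBounded_range (hb.subset ?_)⟩
  rintro _ ⟨n, rfl⟩
  exact Subtype.prop _

theorem exists_injective_bornologous_of_infinite_reachable {r : ℝ} {x : X}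
    (hinf : {y | (coarseGraph X r).Reachable x y}.Infinite) :
    ∃ f : ℤ → X, Injective f ∧ Bornologous f := by
  by_cases hball : ∃ z : X, (Metric.closedBall z r).Infinite
  · obtain ⟨z, hz⟩ := hball
    exact exists_injective_bornologous_of_infinite_of_isBounded hz Metric.isBounded_closedBall
  simp only [not_exists, Set.not_infinite] at hball
  have hfin (z : X) : ((coarseGraph X r).neighborSet z).Finite :=
    (hball z).subset fun y hy ↦ Metric.mem_closedBall.2 (dist_comm y z ▸ hy.2)
  obtain ⟨c, hc, hadj⟩ := (coarseGraph X r).exists_injective_adj_succ hfin hinf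
  exact ⟨c ∘ zigzag, hc.comp zigzag_injective,
    (bornologous_of_dist_succ_le fun n ↦ (hadj n).2).comp bornologous_zigzag⟩

end CoarseGraph

namespace Equiv.Perm

variable {α : Type*}

theorem exists_pos_pow_apply_eq_self_of_finite (σ : Perm α) {s : Set α} (hs : s.Finite)
    (hσ : ∀ y, σ y ∈ s ↔ y ∈ s) : ∃ k, 0 < k ∧ ∀ y ∈ s, (σ ^ k) y = y := by
  have : Finite s := hs.to_subtype
  obtain ⟨k, hk, hpow⟩ :=
    isOfFinOrder_iff_pow_eq_one.1 (isOfFinOrder_of_finite (σ.subtypePerm hσ))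
  refine ⟨k, hk, fun y hy ↦ ?_⟩
  simpa [subtypePerm_pow] using congrArg Subtype.val (DFunLike.congr_fun hpow ⟨y, hy⟩)

theorem apply_comm_of_commute_conj_pow (T a b : Perm α) {s : Set α} (hs : s.Finite)
    (hT : ∀ y, T y ∈ s ↔ y ∈ s) (ha : ∀ y ∈ s, a y ∈ s) (hb : ∀ y ∈ s, b y ∈ s) {N : ℕ}
    (hcomm : ∀ k ≥ N, Commute (T ^ k * a * (T ^ k)⁻¹) b) : ∀ y ∈ s, a (b y) = b (a y) := by
  obtain ⟨k, hk, hfix⟩ := T.exists_pos_pow_apply_eq_self_of_finite hs hT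
  have hfixN (y) (hy : y ∈ s) : (T ^ (k * N)) y = y := by
    rw [pow_mul]
    exact pow_apply_eq_self_of_apply_eq_self (hfix y hy) N
  have hconj (y) (hy : y ∈ s) : (T ^ (k * N) * a * (T ^ (k * N))⁻¹) y = a y := by
    rw [mul_apply, mul_apply, inv_eq_iff_eq.2 (hfixN y hy).symm, hfixN _ (ha y hy)]
  intro y hy
  rw [← hconj _ (hb y hy), ← hconj y hy, ← mul_apply, ← mul_apply,
    (hcomm _ (Nat.le_mul_of_pos_left N hk)).eq]

theorem mul_apply_eq_self_of_apply_comm {a b : Perm α} (ha : a * a = 1) (hb : b * b = 1)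
    (h3 : (a * b) ^ 3 = 1) {y : α} (hy : a (b y) = b (a y)) : (a * b) y = y := by
  have hsq : ((a * b) ^ 2) y = y := by
    rw [sq, mul_apply, mul_apply, mul_apply, hy, ← mul_apply b b, hb, one_apply,
      ← mul_apply, ha, one_apply]
  calc (a * b) y = ((a * b) ^ 3) y := by rw [pow_succ', mul_apply _ ((a * b) ^ 2), hsq]
    _ = y := by rw [h3, one_apply]

end Equiv.Perm

namespace Wobbling

open Equiv (Perm)

variable {X Y : Type*} [MetricSpace X] [MetricSpace Y]

theorem swap_mem [DecidableEq X] (a b : X) : Equiv.swap a b ∈ Wobbling X := by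
  refine ⟨dist a b, fun x ↦ ?_⟩
  rcases eq_or_ne x a with rfl | hxa
  · simp
  rcases eq_or_ne x b with rfl | hxb
  · simp [dist_comm]
  · simp [Equiv.swap_apply_of_ne_of_ne hxa hxb]

theorem addRight_mem {E : Type*} [NormedAddCommGroup E] (c : E) :
    Equiv.addRight c ∈ Wobbling E :=
  ⟨‖c‖, fun x ↦ by simp [dist_eq_norm]⟩

theorem viaEmbedding_mem (f : X ↪ Y) (hf : Bornologous f) {σ : Perm X}
    (hσ : σ ∈ Wobbling X) : σ.viaEmbedding f ∈ Wobbling Y := by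
  classical
  obtain ⟨r, hr⟩ := hσ
  obtain ⟨s, hs⟩ := hf r
  refine ⟨max s 0, fun y ↦ ?_⟩
  by_cases hy : y ∈ range f
  · obtain ⟨x, rfl⟩ := hy
    rw [Equiv.Perm.viaEmbedding_apply]
    exact le_max_of_le_left (hs x (σ x) (hr x))
  · simp [Equiv.Perm.viaEmbedding_apply_of_notMem _ _ _ hy]

noncomputable def viaEmbeddingHom (f : X ↪ Y) (hf : Bornologous f) :
    Wobbling X →* Wobbling Y :=
  ((Equiv.Perm.viaEmbeddingHom f).comp (Wobbling X).subtype).codRestrict _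
    fun σ ↦ viaEmbedding_mem f hf σ.2

theorem viaEmbeddingHom_injective (f : X ↪ Y) (hf : Bornologous f) :
    Injective (viaEmbeddingHom f hf) := fun _ _ h ↦
  Subtype.ext (Equiv.Perm.viaEmbeddingHom_injective f (congrArg Subtype.val h))

theorem eventually_dist_le {σ : Perm X} (hσ : σ ∈ Wobbling X) :
    ∀ᶠ r in Filter.atTop, ∀ x, dist x (σ x) ≤ r := by
  obtain ⟨r, hr⟩ := hσ
  exact Filter.eventually_atTop.2 ⟨r, fun _ hs x ↦ (hr x).trans hs⟩

def swap [DecidableEq X] (a b : X) : Wobbling X := ⟨Equiv.swap a b, swap_mem a b⟩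

def intShift : Wobbling ℤ := ⟨Equiv.addRight 1, addRight_mem 1⟩

theorem swap_mul_self [DecidableEq X] (a b : X) : swap a b * swap a b = 1 :=
  Subtype.ext (Equiv.swap_mul_self a b)

theorem intShift_pow_apply (k : ℕ) (n : ℤ) : ((intShift ^ k : Wobbling ℤ) : Perm ℤ) n = n + k := by
  induction k with
  | zero => simp
  | succ k ih =>
    rw [pow_succ', Subgroup.coe_mul, Perm.mul_apply, ih]
    simp [intShift, add_assoc]

theorem intShift_pow_mul_swap_mul_inv (k : ℕ) :
    intShift ^ k * swap (0 : ℤ) 1 * (intShift ^ k)⁻¹ = swap (k : ℤ) (k + 1) := by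
  apply Subtype.ext
  rw [Subgroup.coe_mul, Subgroup.coe_mul, Subgroup.coe_inv, swap, swap, Subgroup.coe_mk,
    ← Equiv.swap_apply_apply, intShift_pow_apply, intShift_pow_apply, zero_add, add_comm]

theorem commute_intShift_pow_mul_swap_mul_inv {k : ℕ} (hk : 3 ≤ k) :
    Commute (intShift ^ k * swap (0 : ℤ) 1 * (intShift ^ k)⁻¹) (swap 1 2) := by
  rw [intShift_pow_mul_swap_mul_inv]
  exact Subtype.ext (Perm.disjoint_swap_swap (by simp; omega)).commute.eq

theorem swap_mul_swap_apply (n : ℤ) : ((swap (0 : ℤ) 1 * swap 1 2 : Wobbling ℤ) : Perm ℤ) n =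
    if n = 0 then 1 else if n = 1 then 2 else if n = 2 then 0 else n := by
  simp only [Subgroup.coe_mul, swap, Perm.mul_apply, Equiv.swap_apply_def]
  split_ifs <;> omega

theorem swap_mul_swap_ne_one : (swap (0 : ℤ) 1 * swap 1 2 : Wobbling ℤ) ≠ 1 := fun h ↦ by
  have h0 := swap_mul_swap_apply 0
  rw [h] at h0
  simp at h0

theorem swap_mul_swap_pow_three : (swap (0 : ℤ) 1 * swap 1 2 : Wobbling ℤ) ^ 3 = 1 := by
  refine Subtype.ext (Equiv.ext fun n ↦ ?_)
  rw [pow_succ, pow_succ, pow_one, Subgroup.coe_mul, Subgroup.coe_mul, Perm.mul_apply,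
    Perm.mul_apply, swap_mul_swap_apply, swap_mul_swap_apply, swap_mul_swap_apply,
    OneMemClass.coe_one, Perm.one_apply]
  split_ifs <;> omega

theorem map_swap_mul_swap_eq_one (φ : Wobbling ℤ →* Wobbling X)
    (hfin : ∀ (r : ℝ) (x : X), {y | (coarseGraph X r).Reachable x y}.Finite) :
    φ (swap 0 1 * swap 1 2) = 1 := by
  let ψ := (Wobbling X).subtype.comp φ
  obtain ⟨r, hT, hA, hB⟩ := ((eventually_dist_le (φ intShift).2).and
    ((eventually_dist_le (φ (swap 0 1)).2).and (eventually_dist_le (φ (swap 1 2)).2))).exists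
  refine Subtype.ext (Equiv.ext fun x ↦ ?_)
  have hmem (σ : Perm X) (hσ : ∀ y, dist y (σ y) ≤ r) := coarseGraph_reachable_apply_iff hσ x
  change ψ (swap 0 1 * swap 1 2) x = x
  have hψ3 : (ψ (swap 0 1) * ψ (swap 1 2)) ^ 3 = 1 := by
    rw [← map_mul, ← map_pow, swap_mul_swap_pow_three, map_one]
  rw [map_mul]
  refine Perm.mul_apply_eq_self_of_apply_comm (by rw [← map_mul, swap_mul_self, map_one])
    (by rw [← map_mul, swap_mul_self, map_one]) hψ3 ?_
  refine Perm.apply_comm_of_commute_conj_pow (ψ intShift) _ _ (hfin r x) (hmem _ hT)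
    (fun y ↦ (hmem _ hA y).2) (fun y ↦ (hmem _ hB y).2) (N := 3) (fun k hk ↦ ?_) x
    (SimpleGraph.Reachable.refl x)
  have := (commute_intShift_pow_mul_swap_mul_inv hk).map ψ
  simp only [map_mul, map_pow, map_inv] at this
  exact this

end Wobbling

theorem exists_injective_bornologous_of_injective_hom {X : Type*} [MetricSpace X]
    {φ : Wobbling ℤ →* Wobbling X} (hφ : Injective φ) :
    ∃ f : ℤ → X, Injective f ∧ Bornologous f := by
  by_contra hno
  refine Wobbling.swap_mul_swap_ne_one (hφ ?_)
  rw [map_one]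
  exact Wobbling.map_swap_mul_swap_eq_one φ fun r x ↦
    Set.not_infinite.1 fun h ↦ hno (exists_injective_bornologous_of_infinite_reachable h)

/-- A metric space `X` admits a bornologous injection of `ℤ` if and
only if `W(ℤ)` embeds into `W(X)`. -/
theorem stmt_16 {X : Type*} [MetricSpace X] :
    (∃ f : ℤ → X, Function.Injective f ∧ Bornologous f) ↔
      ∃ φ : ↥(Wobbling ℤ) →* ↥(Wobbling X), Function.Injective φ :=
  ⟨fun ⟨f, hf, hb⟩ ↦ ⟨Wobbling.viaEmbeddingHom ⟨f, hf⟩ hb, Wobbling.viaEmbeddingHom_injective _ _⟩,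
    fun ⟨_, hφ⟩ ↦ exists_injective_bornologous_of_injective_hom hφ⟩
end
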